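/- arXiv:2106.01763 — 6 statements merged into one kernel-verified Lean document; each statement's English description precedes it below -/
import Mathlib

section
/- Let Σ be a finite alphabet, j ≥ 1, and T a string over Σ of length n. The number of fragments of T that are minimal order-j fragments is at most n; formally, the set of pairs (a, b) with 0 ≤ a ≤ b < n such that the fragment of T occupying positions a through b (Lean: (T.drop a).take (b − a + 1)) is a minimal order-j fragment has cardinality at most n. -/
/-!
A minimal fragment is determined by its right end `b`: if the fragments `[a, b]` and `[a', b]`
with `a < a'` were both minimal, the complete fragment `[a', b]` would lie inside the tail of
`[a, b]`, contradicting the minimality of `[a, b]`. Hence `(a, b) ↦ b` is injective on minimal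
fragments and takes values below `n`.
-/

/-- A string `V` over `α` is order-`j` complete if every string of length `j` over `α`
occurs in `V`. -/
def OrderComplete {α : Type*} (j : ℕ) (V : List α) : Prop :=
  ∀ W : List α, W.length = j → W <:+: V

/-- `V` is a minimal order-`j` fragment if it is order-`j` complete but neither `V.dropLast`
nor `V.tail` is order-`j` complete. -/
def MinimalOrderFragment {α : Type*} (j : ℕ) (V : List α) : Prop :=
  OrderComplete j V ∧ ¬ OrderComplete j V.dropLast ∧ ¬ OrderComplete j V.tail

theorem OrderComplete.mono {α : Type*} {j : ℕ} {U V : List α} (hU : OrderComplete j U)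
    (hUV : U <:+: V) : OrderComplete j V :=
  fun W hW => (hU W hW).trans hUV

theorem MinimalOrderFragment.not_orderComplete_of_isSuffix_tail {α : Type*} {j : ℕ}
    {U V : List α} (hV : MinimalOrderFragment j V) (hUV : U <:+ V.tail) :
    ¬ OrderComplete j U :=
  fun hU => hV.2.2 (hU.mono hUV.isInfix)

theorem List.drop_take_isSuffix_tail_drop_take {α : Type*} (T : List α) {a a' b : ℕ}
    (haa' : a < a') (ha'b : a' ≤ b) :
    (T.drop a').take (b - a' + 1) <:+ ((T.drop a).take (b - a + 1)).tail := by
  have hdrop : (T.drop a').take (b - a' + 1) =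
      (((T.drop a).take (b - a + 1)).tail).drop (a' - a - 1) := by
    rw [List.drop_tail, List.drop_take, List.drop_drop]
    congr 2 <;> omega
  rw [hdrop]
  exact List.drop_suffix _ _

theorem minimalOrderFragment_left_end_unique {α : Type*} {j : ℕ} (T : List α) {a a' b : ℕ}
    (hab : a ≤ b) (ha'b : a' ≤ b)
    (hmin : MinimalOrderFragment j ((T.drop a).take (b - a + 1)))
    (hmin' : MinimalOrderFragment j ((T.drop a').take (b - a' + 1))) : a = a' := by
  rcases lt_trichotomy a a' with hlt | heq | hgt
  · exact absurd hmin'.1 (hmin.not_orderComplete_of_isSuffix_tail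
      (T.drop_take_isSuffix_tail_drop_take hlt ha'b))
  · exact heq
  · exact absurd hmin.1 (hmin'.not_orderComplete_of_isSuffix_tail
      (T.drop_take_isSuffix_tail_drop_take hgt hab))

theorem minimalOrderFragments_card_le_general {α : Type*} (j : ℕ)
    (T : List α) :
    Set.ncard {p : ℕ × ℕ | p.1 ≤ p.2 ∧ p.2 < T.length ∧
      MinimalOrderFragment j ((T.drop p.1).take (p.2 - p.1 + 1))} ≤ T.length := by
  have hinj : Set.InjOn Prod.snd {p : ℕ × ℕ | p.1 ≤ p.2 ∧ p.2 < T.length ∧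
      MinimalOrderFragment j ((T.drop p.1).take (p.2 - p.1 + 1))} := by
    rintro ⟨a, b⟩ ⟨hab, -, hmin⟩ ⟨a', b'⟩ ⟨ha'b', -, hmin'⟩ (rfl : b = b')
    obtain rfl : a = a' := minimalOrderFragment_left_end_unique T hab ha'b' hmin hmin'
    rfl
  calc _ ≤ (↑(Finset.range T.length) : Set ℕ).ncard :=
        Set.ncard_le_ncard_of_injOn Prod.snd
          (fun p hp => Finset.mem_coe.2 (Finset.mem_range.2 hp.2.1)) hinj
    _ = T.length := by rw [Set.ncard_coe_finset, Finset.card_range]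

/-- A string `T` of length `n` has at most `n` fragments that are minimal
order-`j` fragments: the set of pairs `(a, b)` with `a ≤ b < n` such that the fragment of `T`
at positions `a..b` is a minimal order-`j` fragment has cardinality at most `n`. -/
theorem minimalOrderFragments_card_le {α : Type*} [Fintype α] (j : ℕ) (hj : 1 ≤ j)
    (T : List α) :
    Set.ncard {p : ℕ × ℕ | p.1 ≤ p.2 ∧ p.2 < T.length ∧
      MinimalOrderFragment j ((T.drop p.1).take (p.2 - p.1 + 1))} ≤ T.length :=
  minimalOrderFragments_card_le_general j T
end

section
/- Let V be a type, let N, t, a be natural numbers, and let A : Fin N → V be a sequence such that every element v of V satisfies A(i) = v for some index i with t ≤ i < N. Then the following are equivalent: (1) every element v of V satisfies A(k) = v for some index k with a ≤ k < t; (2) for every index i with t ≤ i < N there exists an index k with a ≤ k < i and A(k) = A(i). (This is the abstract content of the paper's Fact relating completeness of a range to the minimum of the previous-occurrence array PRE: condition (2) says that every position i ≥ t has a previous occurrence of its value at position at least a.) -/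
-- Follow the chain of previous occurrences; well-foundedness makes it leave `T`.
theorem exists_eq_notMem_of_forall_mem_exists_lt {ι V : Type*} [LT ι] [WellFoundedLT ι]
    (A : ι → V) (p : ι → Prop) (T : Set ι)
    (hprev : ∀ i ∈ T, ∃ k, p k ∧ k < i ∧ A k = A i) :
    ∀ i ∈ T, ∃ k, p k ∧ k ∉ T ∧ A k = A i := by
  intro i
  induction i using WellFoundedLT.induction with
  | _ i ih =>
    intro hi
    obtain ⟨k, hpk, hki, hAk⟩ := hprev i hi
    by_cases hkT : k ∈ T
    · obtain ⟨k', hpk', hk'T, hAk'⟩ := ih k hki hkT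
      exact ⟨k', hpk', hk'T, hAk'.trans hAk⟩
    · exact ⟨k, hpk, hkT, hAk⟩

/-- Let `A : Fin N → V` be a sequence in which every value of `V` occurs at
some index in `[t, N)`. Then every value of `V` occurs at some index in `[a, t)` iff every index
`i ∈ [t, N)` has a previous occurrence of its value at an index in `[a, i)`. -/
theorem complete_range_iff_prev_occurrence {V : Type*} (N t a : ℕ) (A : Fin N → V)
    (h : ∀ v : V, ∃ i : Fin N, t ≤ (i : ℕ) ∧ A i = v) :
    (∀ v : V, ∃ k : Fin N, a ≤ (k : ℕ) ∧ (k : ℕ) < t ∧ A k = v) ↔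
      (∀ i : Fin N, t ≤ (i : ℕ) →
        ∃ k : Fin N, a ≤ (k : ℕ) ∧ (k : ℕ) < (i : ℕ) ∧ A k = A i) := by
  constructor
  · intro hcomplete i hti
    obtain ⟨k, hak, hkt, hAk⟩ := hcomplete (A i)
    exact ⟨k, hak, hkt.trans_le hti, hAk⟩
  · intro hprev v
    obtain ⟨i, hti, rfl⟩ := h v
    obtain ⟨k, hak, hkt, hAk⟩ :=
      exists_eq_notMem_of_forall_mem_exists_lt A (a ≤ ·.val) {j | t ≤ j.val} hprev i hti
    exact ⟨k, hak, not_le.mp hkt, hAk⟩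
end

section
/- Let Σ be a finite alphabet of size σ ≥ 2, let W be a nonempty string over Σ, let k be a natural number, and let S be a string over Σ. If for every string U of length k over Σ the concatenation U·W occurs in S, then 4·|S| ≥ |W|·σ^k. -/
/-!
Let `p` be the least period of `W` and `c = W[p - 1]`. If `W` occurs in `S` at positions `q` and
`q + d` with `0 < d` and `2 d ≤ |W|`, then `d` is a period of `W`, so by the Fine–Wilf theorem
`p ∣ d`, and the letter just before the second occurrence is `W[d - 1] = W[p - 1] = c`. Hence the
occurrences of `W` preceded by a letter other than `c` are more than `|W| / 2` apart, and there
are at most `2 |S| / |W|` of them. Every word `U ++ [a]` with `|U| = k - 1` and `a ≠ c` yields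
such an occurrence, distinct words yield distinct ones, and there are
`σ ^ (k - 1) (σ - 1) ≥ σ ^ k / 2` such words.
-/

theorem Finset.card_sub_one_mul_le_of_forall_add_le {s : Finset ℕ} {g B : ℕ}
    (hB : ∀ x ∈ s, x ≤ B) (hsep : ∀ x ∈ s, ∀ y ∈ s, x < y → x + g ≤ y) :
    (s.card - 1) * g ≤ B := by
  induction s using Finset.induction_on_max generalizing B with
  | empty => simp
  | insert a s hlt ih =>
    rw [card_insert_of_notMem fun ha => (hlt a ha).false, Nat.add_sub_cancel]
    obtain rfl | ⟨x, hx⟩ := s.eq_empty_or_nonempty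
    · simp
    have hsep' : ∀ y ∈ s, y + g ≤ a := fun y hy =>
      hsep y (by simp [hy]) a (by simp) (hlt y hy)
    have hs := ih (B := a - g) (fun y hy => by have := hsep' y hy; omega)
      fun y hy z hz => hsep y (by simp [hy]) z (by simp [hz])
    have hxa := hsep' x hx
    have hpos : 1 ≤ s.card := Finset.card_pos.2 ⟨x, hx⟩
    have := hB a (by simp)
    calc s.card * g = (s.card - 1) * g + g := by
          conv_lhs => rw [← Nat.sub_add_cancel hpos]
          ring
      _ ≤ B := by omega

namespace List

variable {α : Type*}

theorem exists_isLeast_hasPeriod (w : List α) :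
    ∃ p, IsLeast {d | 0 < d ∧ w.HasPeriod d} p :=
  ⟨_, Nat.sInf_mem ⟨w.length + 1, by omega, hasPeriod_of_length_le _ _ (by omega)⟩,
    fun _ hd => Nat.sInf_le hd⟩

theorem HasPeriod.dvd_of_isLeast {w : List α} {p d : ℕ}
    (hp : IsLeast {d | 0 < d ∧ w.HasPeriod d} p) (hd : w.HasPeriod d)
    (hlen : p + d ≤ w.length) : p ∣ d := by
  obtain ⟨⟨hp0, hpp⟩, hmin⟩ := hp
  have hgcd : w.HasPeriod (p.gcd d) := hpp.gcd hd (by omega)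
  rw [← Nat.gcd_eq_left_iff_dvd]
  exact le_antisymm (Nat.gcd_le_left d hp0) (hmin ⟨Nat.gcd_pos_of_pos_left d hp0, hgcd⟩)

theorem HasPeriod.getElem?_sub_one_eq_of_dvd {w : List α} {p d : ℕ} (hp : w.HasPeriod p)
    (hp0 : 0 < p) (hpd : p ∣ d) (hd0 : 0 < d) (hdw : d ≤ w.length) :
    w[d - 1]? = w[p - 1]? := by
  have hpd' : p ≤ d := Nat.le_of_dvd hd0 hpd
  have hmod : (p - 1) % p = (d - 1) % p :=
    (Nat.modEq_iff_dvd' (by omega)).2 (by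
      rw [show d - 1 - (p - 1) = d - p by omega]
      exact Nat.dvd_sub hpd dvd_rfl)
  rw [← hp.getElem?_mod p (d - 1) w (by omega), ← hmod, Nat.mod_eq_of_lt (by omega)]

theorem getElem?_add_of_prefix_drop {w s : List α} {q i : ℕ} (h : w <+: s.drop q)
    (hi : i < w.length) : s[q + i]? = w[i]? := by
  rw [← getElem?_drop, prefix_iff_getElem?.1 h i hi, getElem?_eq_getElem hi]

theorem hasPeriod_of_prefix_drop {w s : List α} {q d : ℕ} (hq : w <+: s.drop q)
    (hqd : w <+: s.drop (q + d)) : w.HasPeriod d := by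
  rw [hasPeriod_iff_getElem?]
  intro i hi
  rw [← getElem?_add_of_prefix_drop hqd (i := i) (by omega),
    ← getElem?_add_of_prefix_drop hq (i := i + d) (by omega)]
  congr 1
  omega

theorem getElem?_add_sub_one_of_prefix_drop {w s : List α} {p q d : ℕ}
    (hp : IsLeast {d | 0 < d ∧ w.HasPeriod d} p) (hq : w <+: s.drop q)
    (hqd : w <+: s.drop (q + d)) (hd0 : 0 < d) (hdw : 2 * d ≤ w.length) :
    s[q + d - 1]? = w[p - 1]? := by
  have hd : w.HasPeriod d := hasPeriod_of_prefix_drop hq hqd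
  have hpd : p ≤ d := hp.2 ⟨hd0, hd⟩
  rw [Nat.add_sub_assoc hd0, getElem?_add_of_prefix_drop hq (by omega),
    hp.1.2.getElem?_sub_one_eq_of_dvd hp.1.1 (hd.dvd_of_isLeast hp (by omega)) hd0 (by omega)]

theorem IsInfix.exists_prefix_drop {l₁ l₂ : List α} (h : l₁ <:+: l₂) :
    ∃ r, l₁ <+: l₂.drop r := by
  obtain ⟨s, t, rfl⟩ := h
  exact ⟨s.length, by simp⟩

theorem card_mul_length_le_of_prefix_drop {w s : List α} {p : ℕ}
    (hp : IsLeast {d | 0 < d ∧ w.HasPeriod d} p) {P : Finset ℕ}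
    (hP : ∀ r ∈ P, w <+: s.drop (r + 1) ∧ s[r]? ≠ w[p - 1]?) :
    P.card * w.length ≤ 2 * s.length := by
  set m := w.length
  obtain hm | hm := Nat.eq_zero_or_pos m
  · simp [hm]
  have hsep : ∀ x ∈ P, ∀ y ∈ P, x < y → x + (m / 2 + 1) ≤ y := by
    intro x hx y hy hxy
    by_contra! hclose
    apply (hP y hy).2
    have hy : w <+: s.drop (x + 1 + (y - x)) := by
      rw [show x + 1 + (y - x) = y + 1 by omega]
      exact (hP y hy).1
    simpa [show x + 1 + (y - x) - 1 = y by omega] using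
      getElem?_add_sub_one_of_prefix_drop hp (hP x hx).1 hy (by omega) (by omega)
  have hB : ∀ x ∈ P, x + 1 + m ≤ s.length := fun x hx => by
    have := (hP x hx).1.length_le
    simp only [length_drop] at this
    omega
  obtain rfl | ⟨x, hx⟩ := P.eq_empty_or_nonempty
  · simp
  have hP1 : 1 ≤ P.card := Finset.card_pos.2 ⟨x, hx⟩
  have hpack := Finset.card_sub_one_mul_le_of_forall_add_le (B := s.length - m - 1)
    (fun y hy => by have := hB y hy; omega) hsep
  have hxS := hB x hx
  calc P.card * m = (P.card - 1) * m + m := by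
        conv_lhs => rw [← Nat.sub_add_cancel hP1]
        ring
    _ ≤ (P.card - 1) * (2 * (m / 2 + 1)) + m := by gcongr; omega
    _ = 2 * ((P.card - 1) * (m / 2 + 1)) + m := by ring
    _ ≤ 2 * s.length := by omega

theorem exists_finset_card_of_forall_append_infix [Fintype α] {W S : List α} {n : ℕ} (c : α)
    (h : ∀ U : List α, U.length = n + 1 → U ++ W <:+: S) :
    ∃ P : Finset ℕ, P.card = Fintype.card α ^ n * (Fintype.card α - 1) ∧
      ∀ r ∈ P, W <+: S.drop (r + 1) ∧ S[r]? ≠ some c := by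
  classical
  choose r hr using fun x : List.Vector α n × {a // a ≠ c} =>
    (h (x.1.toList ++ [x.2.1]) (by simp)).exists_prefix_drop
  have hinj : Function.Injective fun x => r x + n := by
    intro x y hxy
    have hU : ∀ x, x.1.toList ++ [x.2.1] = (S.drop (r x)).take (n + 1) := fun x => by
      simpa using prefix_iff_eq_take.1 ((prefix_append _ W).trans (hr x))
    have hxy : r x = r y := by simpa using hxy
    obtain ⟨hv, ha⟩ := append_inj ((hU x).trans (hxy ▸ hU y).symm) (by simp)
    exact Prod.ext (List.Vector.toList_injective hv) (Subtype.ext (by simpa using ha))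
  refine ⟨Finset.univ.image fun x => r x + n, ?_, ?_⟩
  · rw [Finset.card_image_of_injective _ hinj, Finset.card_univ, Fintype.card_prod, card_vector,
      Fintype.card_subtype_compl, Fintype.card_subtype_eq]
  · simp only [Finset.mem_image, Finset.mem_univ, true_and, forall_exists_index,
      forall_apply_eq_imp_iff]
    intro x
    constructor
    · have := (hr x).drop (n + 1)
      rwa [drop_left' (by simp), drop_drop] at this
    · rw [getElem?_add_of_prefix_drop (hr x) (by simp)]
      simpa using x.2.2

end List

/-- Over a finite alphabet of size `σ ≥ 2`, if `W` is nonempty and for every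
string `U` of length `k` the concatenation `U ++ W` occurs in `S`, then `4|S| ≥ |W| · σ^k`. -/
theorem length_ge_of_all_concat_occur {α : Type*} [Fintype α] (hσ : 2 ≤ Fintype.card α)
    (W : List α) (hW : W ≠ []) (k : ℕ) (S : List α)
    (h : ∀ U : List α, U.length = k → (U ++ W) <:+: S) :
    W.length * Fintype.card α ^ k ≤ 4 * S.length := by
  obtain _ | n := k
  · have hWS : W.length ≤ S.length := by simpa using (h [] rfl).length_le
    rw [pow_zero, mul_one]
    omega
  obtain ⟨p, hp⟩ := W.exists_isLeast_hasPeriod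
  have hpW : p - 1 < W.length := by
    have := hp.2 ⟨List.length_pos_iff.2 hW, W.hasPeriod_of_length_le _ le_rfl⟩
    have := hp.1.1
    omega
  obtain ⟨P, hPcard, hP⟩ := List.exists_finset_card_of_forall_append_infix W[p - 1] h
  have hcount := List.card_mul_length_le_of_prefix_drop hp (P := P) fun r hr =>
    ⟨(hP r hr).1, by simpa [List.getElem?_eq_getElem hpW] using (hP r hr).2⟩
  rw [hPcard] at hcount
  set σ := Fintype.card α
  have hpow : σ ^ (n + 1) ≤ 2 * (σ ^ n * (σ - 1)) := by
    rw [pow_succ, mul_left_comm]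
    gcongr
    omega
  calc W.length * σ ^ (n + 1) ≤ W.length * (2 * (σ ^ n * (σ - 1))) := by gcongr
    _ = 2 * (σ ^ n * (σ - 1) * W.length) := by ring
    _ ≤ 4 * S.length := by omega
end

section
/- Let X, Y, P, W be strings over an alphabet Σ such that W is a suffix of P and W does not occur in X. If P occurs in X·Y, then P occurs in D·Y, where D is the suffix of X of length min(|X|, |P| − 1) (Lean: P <:+: X.drop (X.length − (P.length − 1)) ++ Y). -/
/-!
Fix an occurrence `X ++ Y = s ++ P ++ t`. If it ends inside `X`, then `P`, and with it its
suffix `W`, occurs in `X`, which is excluded. So it ends inside `Y`, hence starts at least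
`|X| - (|P| - 1)` letters in, and dropping that many letters of `X` keeps it intact.
-/

namespace List

variable {α : Type*} {X Y s P t : List α}

theorem infix_of_append_eq_of_length_le (h : X ++ Y = s ++ P ++ t)
    (hlen : s.length + P.length ≤ X.length) : P <:+: X := by
  have hsP : s ++ P <+: X ++ Y := h ▸ prefix_append (s ++ P) t
  have hsPX : s ++ P <+: X :=
    prefix_of_prefix_length_le hsP (prefix_append X Y) (by simpa using hlen)
  exact (suffix_append s P).isInfix.trans hsPX.isInfix

theorem infix_drop_append_of_append_eq {d : ℕ} (h : X ++ Y = s ++ P ++ t)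
    (hds : d ≤ s.length) (hdX : d ≤ X.length) : P <:+: X.drop d ++ Y := by
  refine ⟨s.drop d, t, ?_⟩
  rw [← drop_append_of_le_length hdX, h, append_assoc, append_assoc,
    drop_append_of_le_length hds]

end List

/-- If `W` is a suffix of `P` that is absent from `X`, and `P` occurs in
`X ++ Y`, then `P` occurs in `D ++ Y` where `D` is the suffix of `X` of length
`min (|X|) (|P| - 1)`. -/
theorem infix_of_append_of_suffix_absent {α : Type*} (X Y P W : List α)
    (hWP : W <:+ P) (hWX : ¬ W <:+: X) (h : P <:+: X ++ Y) :
    P <:+: X.drop (X.length - (P.length - 1)) ++ Y := by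
  obtain ⟨s, t, hst⟩ := h
  have hends_in_Y : X.length < s.length + P.length := by
    by_contra! hle
    exact hWX (hWP.isInfix.trans (List.infix_of_append_eq_of_length_le hst.symm hle))
  exact List.infix_drop_append_of_append_eq hst.symm (by omega) (Nat.sub_le _ _)
end

section
/- Let Σ be a finite alphabet of size σ ≥ 2 and let X and Y be strings over Σ. Let λ = ℓ(X) be the length of a shortest absent word of X and let m = ℓ(X·Y) be the length of a shortest absent word of X·Y. Then λ ≤ m and, as real numbers, m ≤ λ + max(10, 4 + log_σ(|Y| / λ)), where log_σ denotes the real logarithm to base σ (Lean: Real.logb σ). -/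
/-!
Let `W` be a shortest absent word of `X`, of length `λ`. Appending a suitable letter `c` gives
`U = W ++ [c]` with no period `p ≤ λ/2`: every such period of `W` predicts the same next letter
`W[λ - p]`, and `c` is chosen to differ from it. If all `σ^j` extensions `U ++ v` with `|v| = j`
occurred in `X ++ Y`, they would start at pairwise distinct positions at least `λ/2 + 1` apart
(otherwise `U` would have a short period), all inside a window of length `|Y|` at the junction
(since `W` does not occur in `X`). Hence `σ^j ≤ |Y| / (λ/2 + 1) + 1`, which fails for
`j = ⌊log_σ(|Y|/λ)⌋ + 3`.
-/

theorem Nat.div_add_one_lt_pow_log_add_three {b k : ℕ} (hb : 2 ≤ b) (hk : 0 < k) (n : ℕ) :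
    n / (k / 2 + 1) + 1 < b ^ (Nat.log b (n / k) + 3) := by
  set t := n / k
  have hn : n < (k / 2 + 1) * (2 * (t + 1)) :=
    calc n < k * (t + 1) := Nat.lt_mul_div_succ n hk
      _ ≤ (k / 2 + 1) * (2 * (t + 1)) := by rw [← mul_assoc]; gcongr; omega
  have ht : t + 1 ≤ b ^ (Nat.log b t + 1) := Nat.lt_pow_succ_log_self (by omega) t
  have hb2 : 4 ≤ b ^ 2 := by nlinarith
  calc n / (k / 2 + 1) + 1 ≤ 2 * (t + 1) := Nat.div_lt_of_lt_mul hn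
    _ < 4 * (t + 1) := by linarith
    _ ≤ b ^ 2 * b ^ (Nat.log b t + 1) := Nat.mul_le_mul hb2 ht
    _ = b ^ (Nat.log b t + 3) := by ring

theorem Real.natLog_div_le_max_logb {b : ℕ} (hb : 1 < b) (n k : ℕ) :
    (Nat.log b (n / k) : ℝ) ≤ max 0 (Real.logb b (n / k)) := by
  rcases Nat.eq_zero_or_pos (n / k) with h | h
  · simp [h]
  · exact le_max_of_le_right ((Real.natLog_le_logb _ _).trans
      (Real.logb_le_logb_of_le (by exact_mod_cast hb) (by exact_mod_cast h) Nat.cast_div_le))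

theorem Fintype.card_le_div_add_one_of_separated {ι : Type*} [Fintype ι] (f : ι → ℕ)
    {a n g : ℕ} (hg : 0 < g) (hf : ∀ i, a ≤ f i ∧ f i ≤ a + n)
    (hsep : ∀ i j, i ≠ j → f i + g ≤ f j ∨ f j + g ≤ f i) :
    Fintype.card ι ≤ n / g + 1 := by
  have hslot (i : ι) : (f i - a) / g < n / g + 1 :=
    Nat.lt_succ_of_le (Nat.div_le_div_right (by have := hf i; omega))
  have hlt {i j : ι} (h : f i + g ≤ f j) : (f i - a) / g < (f j - a) / g := by
    rw [Nat.lt_iff_add_one_le, ← Nat.add_div_right _ hg]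
    exact Nat.div_le_div_right (by have := hf i; omega)
  simpa using Fintype.card_le_of_injective
    (fun i => (⟨(f i - a) / g, hslot i⟩ : Fin (n / g + 1))) fun i j hij => by
      by_contra hne
      rcases hsep i j hne with h | h
      · exact (hlt h).ne (Fin.val_eq_of_eq hij)
      · exact (hlt h).ne (Fin.val_eq_of_eq hij).symm

namespace List

variable {α : Type*}

namespace HasPeriod

variable {W : List α} {p q : ℕ}

theorem sub (hp : HasPeriod W p) (hq : HasPeriod W q) (hpq : p + q ≤ W.length) :
    HasPeriod W (q - p) := by
  rcases lt_or_ge q p with hqp | hle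
  · rw [Nat.sub_eq_zero_of_le hqp.le]
    exact hasPeriod_zero W
  rw [hasPeriod_iff_getElem?] at *
  intro i hi
  by_cases hiq : i + q < W.length
  · rw [hq i (by omega), hp (i + (q - p)) (by omega)]
    congr 1
    omega
  · calc W[i]? = W[i - p + p]? := by congr 1; omega
      _ = W[i - p]? := (hp _ (by omega)).symm
      _ = W[i - p + q]? := hq _ (by omega)
      _ = W[i + (q - p)]? := by congr 1; omega

theorem getElem?_length_sub_eq (hp : HasPeriod W p) (hq : HasPeriod W q) (hp0 : 0 < p)
    (hq0 : 0 < q) (hpq : p + q ≤ W.length) : W[W.length - q]? = W[W.length - p]? := by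
  rcases le_total p q with h | h
  · rw [hasPeriod_iff_getElem?.1 (hp.sub hq hpq) (W.length - q) (by omega)]
    congr 1
    omega
  · rw [hasPeriod_iff_getElem?.1 (hq.sub hp (by omega)) (W.length - p) (by omega)]
    congr 1
    omega

theorem getElem?_length_sub_eq_of_append_singleton {c : α} (h : HasPeriod (W ++ [c]) p)
    (hp : 0 < p) (hpW : p ≤ W.length) : W[W.length - p]? = some c := by
  have := hasPeriod_iff_getElem?.1 h (W.length - p) (by simp; omega)
  rwa [getElem?_append_left (by omega), Nat.sub_add_cancel hpW,
    getElem?_concat_length] at this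

end HasPeriod

theorem exists_append_singleton_not_hasPeriod [Nontrivial α] (W : List α) :
    ∃ c : α, ∀ d, 0 < d → 2 * d ≤ W.length → ¬ HasPeriod (W ++ [c]) d := by
  by_cases hW : ∃ p, 0 < p ∧ 2 * p ≤ W.length ∧ HasPeriod W p
  · obtain ⟨p, hp0, hp2, hp⟩ := hW
    obtain ⟨c, hc⟩ := exists_ne W[W.length - p]
    refine ⟨c, fun d hd0 hd2 hd => hc ?_⟩
    have hpd :=
      hp.getElem?_length_sub_eq (hd.infix (infix_append_left ..)) hp0 hd0 (by omega)
    rw [hd.getElem?_length_sub_eq_of_append_singleton hd0 (by omega),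
      getElem?_eq_getElem (by omega)] at hpd
    exact Option.some_injective _ hpd
  · obtain ⟨c⟩ := ‹Nontrivial α›.to_nonempty
    exact ⟨c, fun d hd0 hd2 hd => hW ⟨d, hd0, hd2, hd.infix (infix_append_left ..)⟩⟩

def OccursAt (U T : List α) (k : ℕ) : Prop :=
  U.length + k ≤ T.length ∧ ∀ i (h : i < U.length), T[i + k]? = some U[i]

theorem infix_iff_exists_occursAt {U T : List α} : U <:+: T ↔ ∃ k, OccursAt U T k :=
  infix_iff_getElem?

namespace OccursAt

variable {U V V' T X Y : List α} {k k' : ℕ}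

theorem of_append (h : OccursAt (U ++ V) T k) : OccursAt U T k :=
  ⟨by have := h.1; simp only [length_append] at this; omega, fun i hi => by
    rw [h.2 i (by simp only [length_append]; omega), getElem_append_left hi]⟩

theorem hasPeriod_sub (h : OccursAt U T k) (h' : OccursAt U T k') : HasPeriod U (k' - k) := by
  rcases lt_or_ge k' k with hk | hk
  · rw [Nat.sub_eq_zero_of_le hk.le]
    exact hasPeriod_zero U
  rw [hasPeriod_iff_getElem?]
  intro i hi
  have e := h.2 (i + (k' - k)) (by omega)
  rw [show i + (k' - k) + k = i + k' by omega, h'.2 i (by omega)] at e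
  rw [getElem?_eq_getElem (by omega), getElem?_eq_getElem (by omega), e]

theorem append_right_inj (h : OccursAt (U ++ V) T k) (h' : OccursAt (U ++ V') T k)
    (hV : V.length = V'.length) : V = V' := by
  have hUV : U ++ V = U ++ V' := by
    refine ext_getElem (by simp [hV]) fun i hi hi' => Option.some_injective _ ?_
    rw [← h.2 i hi, h'.2 i hi']
  exact append_cancel_left hUV

theorem infix_left (h : OccursAt U (X ++ Y) k) (hk : U.length + k ≤ X.length) : U <:+: X :=
  infix_iff_exists_occursAt.2 ⟨k, hk, fun i hi => by
    rw [← h.2 i hi, getElem?_append_left (by omega)]⟩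

end OccursAt

theorem exists_length_eq_not_infix_append [Fintype α] {X Y U : List α} {g j : ℕ}
    (hg : 0 < g) (hUX : ¬ U <:+: X) (hU : ∀ d, 0 < d → d < g → ¬ HasPeriod U d)
    (hj : Y.length / g + 1 < Fintype.card α ^ j) :
    ∃ v : List α, v.length = j ∧ ¬ U ++ v <:+: X ++ Y := by
  by_contra! hall
  have hocc (v : Fin j → α) : ∃ k, OccursAt (U ++ ofFn v) (X ++ Y) k :=
    infix_iff_exists_occursAt.1 (hall _ (length_ofFn ..))
  choose f hf using hocc
  refine hj.not_ge ?_
  rw [← Fintype.card_fin j, ← Fintype.card_fun]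
  refine Fintype.card_le_div_add_one_of_separated f hg (a := X.length + 1 - U.length)
    (fun v => ⟨?_, ?_⟩) fun v w hvw => ?_
  · by_contra! hlt
    exact hUX ((hf v).of_append.infix_left (by omega))
  · have := (hf v).1
    simp only [length_append, length_ofFn] at this
    omega
  · by_contra! hclose
    rcases lt_trichotomy (f v) (f w) with hlt | heq | hgt
    · exact hU _ (by omega) (by omega) ((hf v).of_append.hasPeriod_sub (hf w).of_append)
    · exact hvw (ofFn_injective ((hf v).append_right_inj (heq ▸ hf w) (by simp)))
    · exact hU _ (by omega) (by omega) ((hf w).of_append.hasPeriod_sub (hf v).of_append)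

noncomputable def shortestAbsentLength (T : List α) : ℕ :=
  sInf {k | ∃ W : List α, W.length = k ∧ ¬ W <:+: T}

theorem shortestAbsentLength_le {W T : List α} (h : ¬ W <:+: T) :
    T.shortestAbsentLength ≤ W.length :=
  Nat.sInf_le ⟨W, rfl, h⟩

theorem exists_length_eq_shortestAbsentLength [Nonempty α] (T : List α) :
    ∃ W : List α, W.length = T.shortestAbsentLength ∧ ¬ W <:+: T := by
  refine Nat.sInf_mem (s := {k | ∃ W : List α, W.length = k ∧ ¬ W <:+: T}) ?_
  refine ⟨T.length + 1, replicate (T.length + 1) (Classical.arbitrary α), by simp, fun h => ?_⟩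
  simpa using h.length_le

theorem shortestAbsentLength_pos [Nonempty α] (T : List α) : 0 < T.shortestAbsentLength := by
  obtain ⟨W, hW, hWT⟩ := exists_length_eq_shortestAbsentLength T
  refine Nat.pos_of_ne_zero fun h => hWT ?_
  rw [eq_nil_of_length_eq_zero (hW.trans h)]
  exact nil_infix

theorem shortestAbsentLength_mono [Nonempty α] {X T : List α} (h : X <:+: T) :
    X.shortestAbsentLength ≤ T.shortestAbsentLength := by
  obtain ⟨W, hW, hWT⟩ := exists_length_eq_shortestAbsentLength T
  exact hW ▸ shortestAbsentLength_le fun hWX => hWT (hWX.trans h)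

theorem sInf_real_eq_shortestAbsentLength [Nonempty α] (T : List α) :
    sInf {k : ℝ | ∃ W : List α, (W.length : ℝ) = k ∧ ¬ W <:+: T} =
      T.shortestAbsentLength := by
  obtain ⟨W, hW, hWT⟩ := exists_length_eq_shortestAbsentLength T
  refine IsLeast.csInf_eq ⟨⟨W, by rw [hW], hWT⟩, ?_⟩
  rintro _ ⟨V, rfl, hVT⟩
  exact_mod_cast shortestAbsentLength_le hVT

theorem shortestAbsentLength_append_le [Fintype α] (hσ : 2 ≤ Fintype.card α) (X Y : List α) :
    (X ++ Y).shortestAbsentLength ≤ X.shortestAbsentLength + 4 +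
      Nat.log (Fintype.card α) (Y.length / X.shortestAbsentLength) := by
  have : Nontrivial α := Fintype.one_lt_card_iff_nontrivial.1 hσ
  obtain ⟨W, hW, hWX⟩ := exists_length_eq_shortestAbsentLength X
  obtain ⟨c, hc⟩ := exists_append_singleton_not_hasPeriod W
  obtain ⟨v, hv, hvXY⟩ := exists_length_eq_not_infix_append (U := W ++ [c]) (Nat.succ_pos _)
    (fun h => hWX (infix_append_left.trans h)) (fun d hd0 hdg => hc d hd0 (by omega))
    (Nat.div_add_one_lt_pow_log_add_three hσ (shortestAbsentLength_pos X) Y.length)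
  have := shortestAbsentLength_le hvXY
  simp only [length_append, length_singleton] at this
  omega

end List

open List in
/-- Over a finite alphabet of size `σ ≥ 2`, let `λ = ℓ(X)` and `m = ℓ(X ++ Y)`
be the lengths of shortest absent words of `X` and `X ++ Y`. Then `λ ≤ m` and, as reals,
`m ≤ λ + max 10 (4 + log_σ(|Y| / λ))`. -/
theorem shortest_absent_word_extension {α : Type*} [Fintype α] (hσ : 2 ≤ Fintype.card α)
    (X Y : List α) :
    sInf {k | ∃ W : List α, W.length = k ∧ ¬ W <:+: X} ≤
      sInf {k | ∃ W : List α, W.length = k ∧ ¬ W <:+: (X ++ Y)} ∧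
    ((sInf {k | ∃ W : List α, W.length = k ∧ ¬ W <:+: (X ++ Y)} : ℝ) ≤
      (sInf {k | ∃ W : List α, W.length = k ∧ ¬ W <:+: X} : ℝ) +
        max 10 (4 + Real.logb (Fintype.card α)
          ((Y.length : ℝ) / (sInf {k | ∃ W : List α, W.length = k ∧ ¬ W <:+: X} : ℝ)))) := by
  have : Nontrivial α := Fintype.one_lt_card_iff_nontrivial.1 hσ
  refine ⟨shortestAbsentLength_mono infix_append_left, ?_⟩
  rw [sInf_real_eq_shortestAbsentLength, sInf_real_eq_shortestAbsentLength]
  have hm : ((X ++ Y).shortestAbsentLength : ℝ) ≤ X.shortestAbsentLength + 4 +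
      Nat.log (Fintype.card α) (Y.length / X.shortestAbsentLength) := mod_cast
    shortestAbsentLength_append_le hσ X Y
  have hlog := Real.natLog_div_le_max_logb (b := Fintype.card α) (by omega) Y.length
    X.shortestAbsentLength
  have hmax : 4 + max 0 (Real.logb (Fintype.card α) (Y.length / X.shortestAbsentLength)) ≤
      max 10 (4 + Real.logb (Fintype.card α) (Y.length / X.shortestAbsentLength)) := by
    rw [← max_add_add_left, add_zero]
    exact max_le_max (by norm_num) le_rfl
  linarith
end

section
/- Let Σ be a finite alphabet of size σ ≥ 2, let X and Y be strings over Σ, let m = ℓ(X·Y) be the length of a shortest absent word of X·Y, and let λ = ℓ(X) be the length of a shortest absent word of X. If τ is a positive integer with τ ≥ 16 and |Y| ≤ m·τ, then, as real numbers, m − λ ≤ 10 + 2·log_σ(τ), where log_σ denotes the real logarithm to base σ (Lean: Real.logb σ). -/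
/-!
Let `ℓ = ℓ(X)`, `m = ℓ(X ++ Y)` and `D = m - ℓ`. Take `W` absent from `X` with `|W| = ℓ` and
extend it by a letter `c` so that `V = W ++ [c]` has no period `q ≤ ℓ / 2`: if both `W ++ [a]`
and `W ++ [b]` had such periods `qa`, `qb`, then `a` and `b` would both equal the letter of `W`
at position `ℓ - qa - qb`. Each of the `σ ^ (D - 2)` words `U ++ V` with `|U| = D - 2` is shorter
than `m`, hence occurs in `X ++ Y`, and reading off the position of `V` is injective. These
occurrences of `V` all reach into `Y`, since `V` is absent from `X`, and any two are more than
`ℓ / 2` apart, since `V` has no short period. So `σ ^ (D - 2) ≤ |Y| / (ℓ / 2 + 1) + 1 ≤ 3 D τ`, and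
`9 D² ≤ σ ^ (D + 6)` turns this into `σ ^ (D - 10) ≤ τ²`.
-/

lemma card_le_div_add_one_of_separated {S : Finset ℕ} {a n g : ℕ} (hg : 0 < g)
    (hS : ∀ x ∈ S, a ≤ x ∧ x ≤ a + n) (hsep : ∀ x ∈ S, ∀ y ∈ S, x < y → x + g ≤ y) :
    S.card ≤ n / g + 1 := by
  have hmono : StrictMonoOn (fun x => (x - a) / g) S := fun x hx y hy hxy => by
    have := hsep x hx y hy hxy
    have := (hS x hx).1
    calc (x - a) / g < (x - a) / g + 1 := Nat.lt_succ_self _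
      _ = (x - a + g) / g := (Nat.add_div_right _ hg).symm
      _ ≤ (y - a) / g := Nat.div_le_div_right (by omega)
  simpa using Finset.card_le_card_of_injOn (t := Finset.range (n / g + 1)) _
    (fun x hx => Finset.mem_range_succ_iff.2 (Nat.div_le_div_right (by have := hS x hx; omega)))
    hmono.injOn

lemma nine_mul_sq_le_two_pow (n : ℕ) : 9 * n ^ 2 ≤ 2 ^ (n + 6) := by
  induction n with
  | zero => norm_num
  | succ n ih =>
    rw [show n + 1 + 6 = n + 6 + 1 by ring, pow_succ 2 (n + 6)]
    rcases Nat.lt_or_ge n 3 with h | h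
    · interval_cases n <;> norm_num
    · nlinarith

lemma pow_sub_ten_le_sq {b n t : ℕ} (hb : 2 ≤ b) (hn : 10 ≤ n) (h : b ^ (n - 2) ≤ 3 * n * t) :
    b ^ (n - 10) ≤ t ^ 2 := by
  have hbn : 9 * n ^ 2 ≤ b ^ (n + 6) :=
    (nine_mul_sq_le_two_pow n).trans (Nat.pow_le_pow_left hb _)
  have : b ^ (n - 10) * b ^ (n + 6) ≤ t ^ 2 * b ^ (n + 6) :=
    calc b ^ (n - 10) * b ^ (n + 6) = (b ^ (n - 2)) ^ 2 := by
          rw [← pow_add, ← pow_mul]; congr 1; omega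
      _ ≤ (3 * n * t) ^ 2 := Nat.pow_le_pow_left h 2
      _ = 9 * n ^ 2 * t ^ 2 := by ring
      _ ≤ t ^ 2 * b ^ (n + 6) := by rw [mul_comm]; exact Nat.mul_le_mul_left _ hbn
  exact Nat.le_of_mul_le_mul_right this (by positivity)

lemma natCast_le_mul_logb_of_pow_le_pow {b n t k : ℕ} (hb : 2 ≤ b) (ht : 0 < t)
    (h : b ^ n ≤ t ^ k) : (n : ℝ) ≤ k * Real.logb b t := by
  rw [← Real.logb_pow, Real.le_logb_iff_rpow_le (by exact_mod_cast hb) (by positivity),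
    Real.rpow_natCast]
  exact_mod_cast h

namespace List

variable {α : Type*}

lemma getElem?_eq_of_prefix {V L : List α} (h : V <+: L) {i : ℕ} (hi : i < V.length) :
    V[i]? = L[i]? := by
  rw [getElem?_eq_getElem hi, h.getElem hi, getElem?_eq_getElem]

lemma hasPeriod_of_prefix_drop_s15 {V T : List α} {p q : ℕ} (h₁ : V <+: T.drop p)
    (h₂ : V <+: T.drop (p + q)) : V.HasPeriod q := by
  refine hasPeriod_iff_getElem?.2 fun i hi => ?_
  rw [getElem?_eq_of_prefix h₂ (by omega), getElem?_eq_of_prefix h₁ (by omega), getElem?_drop,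
    getElem?_drop, Nat.add_assoc, Nat.add_comm q]

lemma getElem?_eq_of_hasPeriod_append_singleton {W : List α} {c : α} {q : ℕ}
    (h : (W ++ [c]).HasPeriod q) (hq : 0 < q) (hqW : q ≤ W.length) :
    W[W.length - q]? = some c := by
  have := hasPeriod_iff_getElem?.1 h (W.length - q) (by simp only [length_append, length_singleton]; omega)
  rwa [Nat.sub_add_cancel hqW, getElem?_append_left (by omega), getElem?_append_right le_rfl,
    Nat.sub_self, getElem?_singleton] at this

lemma exists_not_hasPeriod_append_singleton [Nontrivial α] (W : List α) :
    ∃ c : α, ∀ q, 0 < q → 2 * q ≤ W.length → ¬ (W ++ [c]).HasPeriod q := by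
  by_contra! h
  obtain ⟨a, b, hab⟩ := exists_pair_ne α
  obtain ⟨qa, hqa, hqaW, ha⟩ := h a
  obtain ⟨qb, hqb, hqbW, hb⟩ := h b
  have hWa := hasPeriod_iff_getElem?.1 (ha.infix (prefix_append W [a]).isInfix)
  have hWb := hasPeriod_iff_getElem?.1 (hb.infix (prefix_append W [b]).isInfix)
  have e₁ : W[W.length - qa - qb]? = W[W.length - qa]? := by
    rw [hWb _ (by omega)]; congr 1; omega
  have e₂ : W[W.length - qa - qb]? = W[W.length - qb]? := by
    rw [hWa _ (by omega)]; congr 1; omega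
  rw [getElem?_eq_of_hasPeriod_append_singleton ha hqa (by omega)] at e₁
  rw [getElem?_eq_of_hasPeriod_append_singleton hb hqb (by omega), e₁] at e₂
  exact hab (Option.some_inj.mp e₂)

lemma IsInfix.exists_prefix_drop_s15 {V T : List α} (h : V <:+: T) :
    ∃ p ≤ T.length, V <+: T.drop p := by
  obtain ⟨A, B, rfl⟩ := h
  exact ⟨A.length, by simp, by simp⟩

lemma IsPrefix.infix_of_drop {V T : List α} {p : ℕ} (h : V <+: T.drop p) : V <:+: T :=
  h.isInfix.trans (drop_suffix p T).isInfix

lemma lt_add_length_of_prefix_drop_append {V X Y : List α} {p : ℕ} (hVX : ¬ V <:+: X)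
    (h : V <+: (X ++ Y).drop p) : X.length < p + V.length := by
  by_contra! hle
  refine hVX (IsPrefix.infix_of_drop (T := X) (p := p) ?_)
  have := prefix_take_iff.2 ⟨h, le_rfl⟩
  rw [take_drop, take_append_of_le_length hle, ← take_drop] at this
  exact this.trans (take_prefix _ _)

section Occurrences

variable [DecidableEq α]

def occurrences (V T : List α) : Finset ℕ :=
  (Finset.range (T.length + 1)).filter fun p => V <+: T.drop p

@[simp]
lemma mem_occurrences {V T : List α} {p : ℕ} :
    p ∈ occurrences V T ↔ p ≤ T.length ∧ V <+: T.drop p := by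
  simp [occurrences]

lemma pow_le_card_occurrences [Fintype α] {V T : List α} (k : ℕ)
    (h : ∀ U : List α, U.length = k + V.length → U <:+: T) :
    Fintype.card α ^ k ≤ (occurrences V T).card := by
  choose p hpT hp using fun u : Fin k → α => (h (ofFn u ++ V) (by simp)).exists_prefix_drop_s15
  have hocc (u : Fin k → α) : p u + k ∈ occurrences V T := by
    have := (hp u).length_le
    simp only [length_append, length_ofFn, length_drop] at this
    exact mem_occurrences.2 ⟨by have := hpT u; omega, by simpa [drop_drop] using (hp u).drop k⟩
  have hinj : Function.Injective fun u => (⟨p u + k, hocc u⟩ : occurrences V T) :=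
    fun u u' huu' => by
      have hpp : p u = p u' := by simpa using huu'
      have := (prefix_of_prefix_length_le (hp u) (hpp ▸ hp u') (by simp)).eq_of_length (by simp)
      exact ofFn_injective (append_inj_left' this rfl)
  simpa using Fintype.card_le_of_injective _ hinj

lemma card_occurrences_append_le {V X Y : List α} (hVX : ¬ V <:+: X)
    (hV : ∀ q, 0 < q → 2 * q < V.length → ¬ V.HasPeriod q) :
    (occurrences V (X ++ Y)).card ≤ Y.length / ((V.length + 1) / 2) + 1 := by
  have hV0 : 0 < V.length := length_pos_iff.2 fun h => hVX (h ▸ nil_infix)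
  refine card_le_div_add_one_of_separated (a := X.length - V.length) (by omega) ?_ ?_
  · intro p hp
    obtain ⟨-, hpV⟩ := mem_occurrences.1 hp
    have := lt_add_length_of_prefix_drop_append hVX hpV
    have := hpV.length_le
    simp only [length_drop, length_append] at this
    omega
  · intro p hp p' hp' hpp'
    by_contra! hclose
    refine hV (p' - p) (by omega) (by omega) (hasPeriod_of_prefix_drop_s15 (mem_occurrences.1 hp).2 ?_)
    rw [Nat.add_sub_cancel' hpp'.le]
    exact (mem_occurrences.1 hp').2

end Occurrences

noncomputable def minAbsentLength (T : List α) : ℕ :=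
  sInf {k | ∃ W : List α, W.length = k ∧ ¬ W <:+: T}

lemma exists_absent_length_eq_minAbsentLength [Nonempty α] (T : List α) :
    ∃ W : List α, W.length = minAbsentLength T ∧ ¬ W <:+: T := by
  obtain ⟨W, hW⟩ : ∃ W : List α, ¬ W <:+: T :=
    ⟨replicate (T.length + 1) (Classical.arbitrary α), fun h => by simpa using h.length_le⟩
  exact Nat.sInf_mem (s := {k | ∃ W : List α, W.length = k ∧ ¬ W <:+: T}) ⟨_, W, rfl, hW⟩

lemma minAbsentLength_le_length {W T : List α} (hW : ¬ W <:+: T) : minAbsentLength T ≤ W.length :=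
  Nat.sInf_le ⟨W, rfl, hW⟩

lemma infix_of_length_lt_minAbsentLength {U T : List α} (h : U.length < minAbsentLength T) :
    U <:+: T := by
  by_contra hU
  exact (minAbsentLength_le_length hU).not_gt h

lemma sInf_absent_lengths_real_eq [Nonempty α] (T : List α) :
    sInf {x : ℝ | ∃ W : List α, (W.length : ℝ) = x ∧ ¬ W <:+: T} = minAbsentLength T := by
  obtain ⟨W, hW, hWT⟩ := exists_absent_length_eq_minAbsentLength T
  refine IsLeast.csInf_eq ⟨⟨W, by rw [hW], hWT⟩, ?_⟩
  rintro x ⟨U, rfl, hUT⟩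
  exact_mod_cast minAbsentLength_le_length hUT

lemma card_pow_le_of_add_le_minAbsentLength_append [Fintype α] [Nontrivial α] (X Y : List α)
    {k : ℕ} (hk : minAbsentLength X + k + 2 ≤ minAbsentLength (X ++ Y)) :
    Fintype.card α ^ k ≤ Y.length / (minAbsentLength X / 2 + 1) + 1 := by
  classical
  obtain ⟨W, hWX_len, hWX⟩ := exists_absent_length_eq_minAbsentLength X
  obtain ⟨c, hc⟩ := exists_not_hasPeriod_append_singleton W
  have hVX : ¬ W ++ [c] <:+: X := fun h => hWX ((prefix_append W [c]).isInfix.trans h)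
  calc Fintype.card α ^ k ≤ (occurrences (W ++ [c]) (X ++ Y)).card :=
        pow_le_card_occurrences k fun U hU =>
          infix_of_length_lt_minAbsentLength (by simp at hU; omega)
    _ ≤ Y.length / (((W ++ [c]).length + 1) / 2) + 1 :=
        card_occurrences_append_le hVX fun q hq hqV => hc q hq (by simp at hqV; omega)
    _ = Y.length / (minAbsentLength X / 2 + 1) + 1 := by
        simp only [length_append, length_singleton, hWX_len]
        congr 2; omega

end List

/-- Over a finite alphabet of size `σ ≥ 2`, let `m = ℓ(X ++ Y)` and
`λ = ℓ(X)` be the lengths of shortest absent words. If `τ ≥ 16` is a positive integer and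
`|Y| ≤ m·τ`, then, as reals, `m − λ ≤ 10 + 2·log_σ(τ)`. -/
theorem shortest_absent_word_reverse_extension {α : Type*} [Fintype α]
    (hσ : 2 ≤ Fintype.card α) (X Y : List α) (τ : ℕ) (hτ : 16 ≤ τ)
    (hY : Y.length ≤ sInf {k | ∃ W : List α, W.length = k ∧ ¬ W <:+: (X ++ Y)} * τ) :
    (sInf {k | ∃ W : List α, W.length = k ∧ ¬ W <:+: (X ++ Y)} : ℝ) -
      (sInf {k | ∃ W : List α, W.length = k ∧ ¬ W <:+: X} : ℝ) ≤
      10 + 2 * Real.logb (Fintype.card α) τ := by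
  have : Nontrivial α := Fintype.one_lt_card_iff_nontrivial.1 hσ
  rw [List.sInf_absent_lengths_real_eq, List.sInf_absent_lengths_real_eq]
  change Y.length ≤ (X ++ Y).minAbsentLength * τ at hY
  set m := (X ++ Y).minAbsentLength
  set l := X.minAbsentLength
  rcases le_or_gt m (l + 10) with hsmall | hlarge
  · have : (m : ℝ) ≤ l + 10 := by exact_mod_cast hsmall
    have : 0 ≤ Real.logb (Fintype.card α) τ :=
      Real.logb_nonneg (by exact_mod_cast hσ) (by exact_mod_cast (by omega : 1 ≤ τ))
    linarith
  obtain ⟨D, hD⟩ : ∃ D, m = l + D := ⟨m - l, by omega⟩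
  have hcount : Fintype.card α ^ (D - 2) ≤ Y.length / (l / 2 + 1) + 1 :=
    List.card_pow_le_of_add_le_minAbsentLength_append X Y (by omega)
  have hYD : Y.length / (l / 2 + 1) ≤ 2 * D * τ := by
    refine Nat.div_le_of_le_mul (hY.trans ?_)
    have : l + D ≤ (l / 2 + 1) * (2 * D) := by
      nlinarith [Nat.div_add_mod l 2, Nat.mod_lt l two_pos]
    calc m * τ = (l + D) * τ := by rw [hD]
      _ ≤ (l / 2 + 1) * (2 * D) * τ := Nat.mul_le_mul_right τ this
      _ = (l / 2 + 1) * (2 * D * τ) := by ring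
  have hpow : Fintype.card α ^ (D - 10) ≤ τ ^ 2 :=
    pow_sub_ten_le_sq hσ (by omega) (hcount.trans (by nlinarith))
  have hlog := natCast_le_mul_logb_of_pow_le_pow hσ (by omega) hpow
  rw [hD, Nat.cast_add]
  rw [Nat.cast_sub (by omega : 10 ≤ D)] at hlog
  push_cast at hlog
  linarith
end
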